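/- arXiv:2601.00149 — 3 statements merged into one kernel-verified Lean document; each statement's English description precedes it below -/
import Mathlib

section
/- Under the hypotheses of the previous contraction (all |λa k / λb k| ≤ C < 1, λb k ≠ 0), the equation λa(k)·u(k) − λb(k)·u(k+1 mod q) = b(k) for all k = 0,…,q−1 has a unique solution u : Fin q → ℂ. -/
theorem stmt3 (q : ℕ) [NeZero q] (lamA lamB b : ZMod q → ℂ)
    (hlamB : ∀ k, lamB k ≠ 0) (C : ℝ) (hC1 : C < 1)
    (hC : ∀ k, ‖lamA k / lamB k‖ ≤ C) :
    ∃! u : ZMod q → ℂ, ∀ k, lamA k * u k - lamB k * u (k + 1) = b k := by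
  have hC0 : (0:ℝ) ≤ C := le_trans (norm_nonneg _) (hC 0)
  set T : (ZMod q → ℂ) →ₗ[ℂ] (ZMod q → ℂ) :=
    { toFun := fun u k => lamA k * u k - lamB k * u (k + 1)
      map_add' := by intro u v; funext k; simp [Pi.add_apply]; ring
      map_smul' := by intro c u; funext k; simp [Pi.smul_apply, smul_eq_mul]; ring }
    with hT
  have hinj : Function.Injective T := by
    rw [injective_iff_map_eq_zero]
    intro u hu
    have hrec : ∀ k : ZMod q, u (k + 1) = (lamA k / lamB k) * u k := by
      intro k
      have h := congrFun hu k
      simp only [hT, LinearMap.coe_mk, AddHom.coe_mk, Pi.zero_apply] at h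
      rw [div_mul_eq_mul_div, eq_div_iff (hlamB k)]
      linear_combination -h
    obtain ⟨k0, _, hk0⟩ := Finset.exists_max_image Finset.univ
      (fun k => ‖u k‖) ⟨0, Finset.mem_univ 0⟩
    have hbound : ‖u k0‖ ≤ C * ‖u k0‖ := by
      have h1 : u k0 = (lamA (k0-1) / lamB (k0-1)) * u (k0-1) := by
        have := hrec (k0 - 1); rwa [sub_add_cancel] at this
      calc ‖u k0‖ = ‖lamA (k0-1) / lamB (k0-1)‖ * ‖u (k0-1)‖ := by
            rw [h1, norm_mul]
        _ ≤ C * ‖u (k0-1)‖ :=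
            mul_le_mul_of_nonneg_right (hC _) (norm_nonneg _)
        _ ≤ C * ‖u k0‖ :=
            mul_le_mul_of_nonneg_left (hk0 _ (Finset.mem_univ _)) hC0
    have hzero : ‖u k0‖ = 0 := by
      nlinarith [norm_nonneg (u k0)]
    funext k
    have : ‖u k‖ ≤ 0 := hzero ▸ hk0 k (Finset.mem_univ k)
    have : ‖u k‖ = 0 := le_antisymm this (norm_nonneg _)
    simpa using norm_eq_zero.mp this
  have hsurj : Function.Surjective T := (LinearMap.injective_iff_surjective).mp hinj
  obtain ⟨u, huu⟩ := hsurj b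
  refine ⟨u, fun k => congrFun huu k, ?_⟩
  intro v hv
  apply hinj
  rw [huu]; funext k; exact hv k
end

section
/- Let J be the 4×4 standard symplectic matrix with block form [[0, I₂],[−I₂, 0]], defining Ω(v, w) = vᵀ J w. Suppose M : ZMod q → Matrix (Fin 4) (Fin 4) ℝ are symplectic matrices (M(k)ᵀ J M(k) = J), u, v_s : ZMod q → ℝ⁴, and λ ∈ ℝ with 0 < λ < 1 satisfy M(k) ⬝ u(k) = u(k+1) and M(k) ⬝ v_s(k) = λ • v_s(k+1) for all k. Then Ω(u(k), v_s(k)) = 0 for every k. -/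
/-- The standard 4×4 symplectic matrix `[[0, I₂], [−I₂, 0]]`. -/
def J4 : Matrix (Fin 4) (Fin 4) ℝ :=
  Matrix.of fun i j =>
    if (i : ℕ) + 2 = (j : ℕ) then 1 else if (j : ℕ) + 2 = (i : ℕ) then -1 else 0

/-- The standard symplectic form on ℝ⁴: `Ω(v, w) = vᵀ J w`. -/
def Omega4 (v w : Fin 4 → ℝ) : ℝ := dotProduct v (J4.mulVec w)

lemma omega4_mulVec (A : Matrix (Fin 4) (Fin 4) ℝ) (h : A.transpose * J4 * A = J4)
    (v w : Fin 4 → ℝ) : Omega4 (A.mulVec v) (A.mulVec w) = Omega4 v w := by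
  unfold Omega4
  rw [Matrix.mulVec_mulVec, ← Matrix.vecMul_transpose, Matrix.dotProduct_mulVec,
    Matrix.vecMul_vecMul, ← Matrix.dotProduct_mulVec, ← Matrix.mul_assoc, h]

lemma omega4_smul_right (v w : Fin 4 → ℝ) (c : ℝ) :
    Omega4 v (c • w) = c * Omega4 v w := by
  unfold Omega4
  rw [Matrix.mulVec_smul, dotProduct_smul, smul_eq_mul]

theorem stmt9 (q : ℕ) [NeZero q]
    (M : ZMod q → Matrix (Fin 4) (Fin 4) ℝ)
    (hsymp : ∀ k, (M k).transpose * J4 * M k = J4)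
    (u vs : ZMod q → (Fin 4 → ℝ)) (lam : ℝ) (hlam0 : 0 < lam) (hlam1 : lam < 1)
    (hu : ∀ k, (M k).mulVec (u k) = u (k + 1))
    (hvs : ∀ k, (M k).mulVec (vs k) = lam • vs (k + 1)) :
    ∀ k, Omega4 (u k) (vs k) = 0 := by
  have hstep : ∀ k, Omega4 (u k) (vs k) = lam * Omega4 (u (k + 1)) (vs (k + 1)) := by
    intro k
    rw [← omega4_mulVec (M k) (hsymp k), hu, hvs, omega4_smul_right]
  have hiter : ∀ n : ℕ, ∀ k, Omega4 (u k) (vs k) = lam ^ n * Omega4 (u (k + n)) (vs (k + n)) := by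
    intro n
    induction n with
    | zero => intro k; simp
    | succ n ih =>
      intro k
      rw [hstep k, ih (k + 1),
        show (k + 1 + (n : ZMod q)) = k + (((n : ℕ) + 1 : ℕ) : ZMod q) by push_cast; ring]
      ring
  intro k
  have h := hiter q k
  rw [show ((q : ℕ) : ZMod q) = 0 by simp, add_zero] at h
  have hpow : lam ^ q < 1 := pow_lt_one₀ hlam0.le hlam1 (NeZero.ne q)
  nlinarith [sq_nonneg (Omega4 (u k) (vs k)), h]
end

section
/- Let M, u be as before (M(k) u(k) = u(k+1), indices in ZMod q), and let v_c : ZMod q → ℝ⁴ and A : ZMod q → ℝ satisfy M(k) v_c(k) = A(k) • u(k+1) + v_c(k+1) for all k. Set T = (1/q) Σ_k A(k), and let a : ZMod q → ℝ solve a(k) − a(k+1) = −(A(k) − T) for all k. Then v₂(k) := v_c(k) + a(k) • u(k) satisfies M(k) v₂(k) = T • u(k+1) + v₂(k+1) for all k. -/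
theorem stmt12 (q : ℕ) [NeZero q]
    (M : ZMod q → Matrix (Fin 4) (Fin 4) ℝ)
    (u vc : ZMod q → (Fin 4 → ℝ)) (A : ZMod q → ℝ)
    (hu : ∀ k, (M k).mulVec (u k) = u (k + 1))
    (hvc : ∀ k, (M k).mulVec (vc k) = A k • u (k + 1) + vc (k + 1))
    (T : ℝ) (hT : T = (1 / (q : ℝ)) * ∑ k : ZMod q, A k)
    (a : ZMod q → ℝ) (ha : ∀ k, a k - a (k + 1) = -(A k - T)) :
    ∀ k, (M k).mulVec (vc k + a k • u k)
      = T • u (k + 1) + (vc (k + 1) + a (k + 1) • u (k + 1)) := by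
  intro k
  have h1 : a (k + 1) = a k + A k - T := by linarith [ha k]
  rw [Matrix.mulVec_add, Matrix.mulVec_smul, hu, hvc, h1]
  ext i
  simp
  ring
end
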